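/- arXiv:1211.6780 — 5 statements merged into one kernel-verified Lean document; each statement's English description precedes it below -/
import Mathlib

section
/- Let p_1,…,p_{2n} : [0,T) → ℝ² be a solution of the planar point-vortex gradient flow. Then the sum V₀(t) = Σ_{i=1}^{2n} P_i(t) of the corresponding sphere points is differentiable on (0,T) and satisfies V₀'(t) = V₀(t) for every t ∈ (0,T). -/
open Finset

noncomputable section

abbrev E2 := EuclideanSpace ℝ (Fin 2)
abbrev E3 := EuclideanSpace ℝ (Fin 3)

/-- Velocity field of the planar point-vortex gradient flow. -/
def pvVel {N : ℕ} (d : Fin N → ℤ) (q : Fin N → E2) (i : Fin N) : E2 :=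
  ((1 + ‖q i‖ ^ 2) ^ 2 / 2) •
    ((1 + ‖q i‖ ^ 2)⁻¹ • q i +
      (d i : ℝ) • ∑ j ∈ univ.erase i, (d j : ℝ) • (‖q i - q j‖ ^ 2)⁻¹ • (q i - q j))

/-- Inverse stereographic projection: the sphere point corresponding to `p ∈ ℝ²`. -/
def sph (p : E2) : E3 :=
  (WithLp.equiv 2 (Fin 3 → ℝ)).symm
    ![2 * p 0 / (1 + ‖p‖ ^ 2), 2 * p 1 / (1 + ‖p‖ ^ 2), (‖p‖ ^ 2 - 1) / (1 + ‖p‖ ^ 2)]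


/-! Write the sphere point as `P = (σ p, 1 - σ)` with `σ p = 2 / (1 + ‖p‖²)`. Along the flow,
`Ṗᵢ` is a self-interaction term, equal to `Pᵢ + (-pᵢ, 1)`, plus pair terms weighted by
`dᵢ dⱼ / ‖pᵢ - pⱼ‖²`. Adding the `(i, j)` and `(j, i)` terms shows that the pair terms sum to
`∑ᵢ ∑_{j ≠ i} dᵢ dⱼ (-pᵢ, 1)`, and neutrality (`∑ dⱼ = 0`, `dᵢ² = 1`) gives
`∑_{j ≠ i} dᵢ dⱼ = -1`, so they cancel the correction `(-pᵢ, 1)`. -/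

open scoped RealInnerProductSpace

section PairSums

variable {ι : Type*} [Fintype ι] [DecidableEq ι]

theorem sum_sum_erase_eq_of_add_swap {M : Type*} [AddCommGroup M] [IsAddTorsionFree M]
    (f g : ι → ι → M) (h : ∀ i j, i ≠ j → f i j + f j i = g i j + g j i) :
    ∑ i, ∑ j ∈ univ.erase i, f i j = ∑ i, ∑ j ∈ univ.erase i, g i j := by
  have symm_sum (f : ι → ι → M) :
      2 • ∑ i, ∑ j ∈ univ.erase i, f i j = ∑ i, ∑ j ∈ univ.erase i, (f i j + f j i) := by
    have swap : ∑ i, ∑ j ∈ univ.erase i, f j i = ∑ i, ∑ j ∈ univ.erase i, f i j :=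
      sum_comm' fun _ _ => by simp [ne_comm]
    simp only [sum_add_distrib, swap, two_nsmul]
  refine nsmul_right_injective two_ne_zero ?_
  simp only [symm_sum]
  exact sum_congr rfl fun i _ => sum_congr rfl fun j hj => h i j (ne_of_mem_erase hj).symm

theorem sum_sum_erase_mul_smul_eq_neg_sum {R M : Type*} [CommRing R] [AddCommGroup M] [Module R M]
    (d : ι → R) (hd : ∀ i, d i * d i = 1) (hdsum : ∑ i, d i = 0) (x : ι → M) :
    ∑ i, ∑ j ∈ univ.erase i, (d i * d j) • x i = -∑ i, x i := by
  rw [← sum_neg_distrib]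
  refine sum_congr rfl fun i _ => ?_
  rw [← sum_smul, ← mul_sum, sum_erase_eq_sub (mem_univ i), hdsum, zero_sub, mul_neg, hd i,
    neg_one_smul]

end PairSums

section Vortex

variable {ι F : Type*} [Fintype ι] [DecidableEq ι] [NormedAddCommGroup F] [InnerProductSpace ℝ F]

theorem inner_sub_add_inner_sub (a b : F) : ⟪a, a - b⟫ + ⟪b, b - a⟫ = ‖a - b‖ ^ 2 := by
  rw [← real_inner_self_eq_norm_sq]
  simp only [inner_sub_left, inner_sub_right, real_inner_comm a b]
  ring

theorem one_add_norm_sq_smul_sub_add_swap (a b : F) :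
    ((1 + ‖a‖ ^ 2) • (a - b) - (2 * ⟪a, a - b⟫) • a)
      + ((1 + ‖b‖ ^ 2) • (b - a) - (2 * ⟪b, b - a⟫) • b) = -‖a - b‖ ^ 2 • (a + b) := by
  simp only [← real_inner_self_eq_norm_sq, inner_sub_left, inner_sub_right, real_inner_comm a b]
  module

def vortexField (d : ι → ℝ) (q : ι → F) (i : ι) : F :=
  ∑ j ∈ univ.erase i, d j • (‖q i - q j‖ ^ 2)⁻¹ • (q i - q j)

variable {d : ι → ℝ} {q : ι → F}

theorem sum_mul_inner_vortexField (hd : ∀ i, d i * d i = 1) (hdsum : ∑ i, d i = 0)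
    (hq : Pairwise fun i j => q i ≠ q j) :
    ∑ i, d i * ⟪q i, vortexField d q i⟫ = -(Fintype.card ι / 2 : ℝ) := by
  calc ∑ i, d i * ⟪q i, vortexField d q i⟫
      = ∑ i, ∑ j ∈ univ.erase i, d i * d j * ((‖q i - q j‖ ^ 2)⁻¹ * ⟪q i, q i - q j⟫) := by
        simp only [vortexField, inner_sum, inner_smul_right, mul_sum, mul_assoc]
    _ = ∑ i, ∑ j ∈ univ.erase i, (d i * d j) • (1 / 2 : ℝ) := by
        refine sum_sum_erase_eq_of_add_swap _ _ fun i j hij => ?_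
        have hne : ‖q i - q j‖ ^ 2 ≠ 0 := by simpa [sub_eq_zero] using hq hij
        rw [norm_sub_rev (q j), smul_eq_mul, smul_eq_mul]
        linear_combination
          d i * d j * (‖q i - q j‖ ^ 2)⁻¹ * inner_sub_add_inner_sub (q i) (q j)
            + d i * d j * inv_mul_cancel₀ hne
    _ = -(Fintype.card ι / 2 : ℝ) := by
        rw [sum_sum_erase_mul_smul_eq_neg_sum _ hd hdsum, sum_const, card_univ, nsmul_eq_mul]
        ring

theorem sum_smul_vortexField (hd : ∀ i, d i * d i = 1) (hdsum : ∑ i, d i = 0)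
    (hq : Pairwise fun i j => q i ≠ q j) :
    ∑ i, d i • ((1 + ‖q i‖ ^ 2) • vortexField d q i
      - (2 * ⟪q i, vortexField d q i⟫) • q i) = ∑ i, q i := by
  calc ∑ i, d i • ((1 + ‖q i‖ ^ 2) • vortexField d q i
        - (2 * ⟪q i, vortexField d q i⟫) • q i)
      = ∑ i, ∑ j ∈ univ.erase i, (d i * d j * (‖q i - q j‖ ^ 2)⁻¹) •
          ((1 + ‖q i‖ ^ 2) • (q i - q j) - (2 * ⟪q i, q i - q j⟫) • q i) := by
        refine sum_congr rfl fun i _ => ?_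
        simp only [vortexField, inner_sum, mul_sum, sum_smul, smul_sum, ← sum_sub_distrib]
        refine sum_congr rfl fun j _ => ?_
        simp only [inner_smul_right]
        module
    _ = ∑ i, ∑ j ∈ univ.erase i, (d i * d j) • -q i := by
        have : IsAddTorsionFree F := .of_isTorsionFree ℝ F
        refine sum_sum_erase_eq_of_add_swap _ _ fun i j hij => ?_
        have hne : ‖q i - q j‖ ^ 2 ≠ 0 := by simpa [sub_eq_zero] using hq hij
        rw [norm_sub_rev (q j), mul_comm (d j), ← smul_add, one_add_norm_sq_smul_sub_add_swap,
          smul_smul, mul_assoc, mul_neg, inv_mul_cancel₀ hne]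
        module
    _ = ∑ i, q i := by
        rw [sum_sum_erase_mul_smul_eq_neg_sum _ hd hdsum, sum_neg_distrib, neg_neg]

end Vortex

section Sphere

variable {F : Type*} [NormedAddCommGroup F] [InnerProductSpace ℝ F]

def sphFactor (p : F) : ℝ := 2 / (1 + ‖p‖ ^ 2)

theorem HasDerivAt.sphFactor_comp {γ : ℝ → F} {v : F} {t : ℝ} (hγ : HasDerivAt γ v t) :
    HasDerivAt (fun s => sphFactor (γ s)) (-(sphFactor (γ t) ^ 2 * ⟪γ t, v⟫)) t := by
  have hW : 1 + ‖γ t‖ ^ 2 ≠ 0 := by positivity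
  have e : (fun s => sphFactor (γ s)) = fun s => 2 * (1 + ‖γ s‖ ^ 2)⁻¹ :=
    funext fun s => div_eq_mul_inv _ _
  rw [e]
  refine (((hγ.norm_sq.const_add 1).fun_inv hW).const_mul 2).congr_deriv ?_
  rw [sphFactor]
  field_simp

-- `((1 + ‖x‖ ^ 2) ^ 2 / 2) • ((1 + ‖x‖ ^ 2)⁻¹ • x + c • w)` is `pvVel d q i` for `x = q i`,
-- `c = d i` and `w = vortexField d q i`, see `pvVel_eq`.
theorem sphFactor_sq_mul_inner (x w : F) (c : ℝ) :
    sphFactor x ^ 2 * ⟪x, ((1 + ‖x‖ ^ 2) ^ 2 / 2) • ((1 + ‖x‖ ^ 2)⁻¹ • x + c • w)⟫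
      = 2 - sphFactor x + 2 * c * ⟪x, w⟫ := by
  have hW : 1 + ‖x‖ ^ 2 ≠ 0 := by positivity
  simp only [sphFactor, inner_smul_right, inner_add_right, real_inner_self_eq_norm_sq]
  field_simp
  ring

theorem sphFactor_smul_sub_smul (x w : F) (c : ℝ) :
    sphFactor x • (((1 + ‖x‖ ^ 2) ^ 2 / 2) • ((1 + ‖x‖ ^ 2)⁻¹ • x + c • w))
      - (2 - sphFactor x + 2 * c * ⟪x, w⟫) • x
      = (sphFactor x - 1) • x + c • ((1 + ‖x‖ ^ 2) • w - (2 * ⟪x, w⟫) • x) := by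
  have hW : 1 + ‖x‖ ^ 2 ≠ 0 := by positivity
  have h1 : sphFactor x * ((1 + ‖x‖ ^ 2) ^ 2 / 2) * (1 + ‖x‖ ^ 2)⁻¹ = 1 := by
    rw [sphFactor]; field_simp
  have h2 : sphFactor x * ((1 + ‖x‖ ^ 2) ^ 2 / 2) = 1 + ‖x‖ ^ 2 := by
    rw [sphFactor]; field_simp
  rw [smul_smul, smul_add, smul_smul, smul_smul, h1, h2]
  module

end Sphere

def toE3 : E2 × ℝ →L[ℝ] E3 :=
  LinearMap.toContinuousLinearMap
    { toFun := fun x => (WithLp.equiv 2 (Fin 3 → ℝ)).symm ![x.1 0, x.1 1, x.2]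
      map_add' := fun x y => by ext k; fin_cases k <;> simp
      map_smul' := fun c x => by ext k; fin_cases k <;> simp }

theorem sph_eq_toE3 (p : E2) : sph p = toE3 (sphFactor p • p, 1 - sphFactor p) := by
  have hW : 1 + ‖p‖ ^ 2 ≠ 0 := by positivity
  ext k
  fin_cases k <;> simp [sph, toE3, sphFactor] <;> field_simp
  ring

def sphDeriv (p v : E2) : E3 :=
  toE3 (sphFactor p • v - (sphFactor p ^ 2 * ⟪p, v⟫) • p, sphFactor p ^ 2 * ⟪p, v⟫)

theorem HasDerivAt.sph_comp {γ : ℝ → E2} {v : E2} {t : ℝ} (hγ : HasDerivAt γ v t) :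
    HasDerivAt (fun s => sph (γ s)) (sphDeriv (γ t) v) t := by
  have hσ := hγ.sphFactor_comp
  have e : (fun s => sph (γ s)) = toE3 ∘ fun s => (sphFactor (γ s) • γ s, 1 - sphFactor (γ s)) :=
    funext fun s => sph_eq_toE3 (γ s)
  rw [e]
  refine (toE3.hasFDerivAt.comp_hasDerivAt t
    ((hσ.fun_smul hγ).prodMk (hσ.const_sub 1))).congr_deriv ?_
  simp only [sphDeriv, neg_smul, neg_neg, sub_eq_add_neg]

theorem pvVel_eq {N : ℕ} (d : Fin N → ℤ) (q : Fin N → E2) (i : Fin N) :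
    pvVel d q i = ((1 + ‖q i‖ ^ 2) ^ 2 / 2) •
      ((1 + ‖q i‖ ^ 2)⁻¹ • q i + (d i : ℝ) • vortexField (fun j => (d j : ℝ)) q i) := rfl

theorem sum_sphDeriv_pvVel {N : ℕ} {d : Fin N → ℤ} {q : Fin N → E2}
    (hd : ∀ i, d i = 1 ∨ d i = -1) (hdsum : ∑ i, d i = 0) (hq : Pairwise fun i j => q i ≠ q j) :
    ∑ i, sphDeriv (q i) (pvVel d q i) = ∑ i, sph (q i) := by
  have hd' : ∀ i, (d i : ℝ) * d i = 1 := fun i => by rcases hd i with h | h <;> simp [h]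
  have hdsum' : ∑ i, (d i : ℝ) = 0 := by exact_mod_cast hdsum
  simp only [sphDeriv, sph_eq_toE3, pvVel_eq, sphFactor_sq_mul_inner, ← map_sum]
  congr 1
  refine Prod.ext ?_ ?_ <;> simp only [Prod.fst_sum, Prod.snd_sum]
  · simp only [sphFactor_smul_sub_smul, sum_add_distrib, sum_smul_vortexField hd' hdsum' hq,
      sub_smul, one_smul, sum_sub_distrib]
    abel
  · simp only [sum_add_distrib, sum_sub_distrib, mul_assoc, ← mul_sum,
      sum_mul_inner_vortexField hd' hdsum' hq, sum_const, card_univ, Fintype.card_fin, nsmul_eq_mul]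
    ring

theorem sum_sphere_points_hasDerivAt_self_general
    (n : ℕ) (T : ℝ)
    (p : Fin (2 * n) → ℝ → E2) (d : Fin (2 * n) → ℤ)
    (hd : ∀ i, d i = 1 ∨ d i = -1) (hdsum : ∑ i, d i = 0)
    (hdist : ∀ t ∈ Set.Ico (0 : ℝ) T, ∀ i j, i ≠ j → p i t ≠ p j t)
    (hode : ∀ t ∈ Set.Ico (0 : ℝ) T, ∀ i,
      HasDerivWithinAt (p i) (pvVel d (fun j => p j t) i) (Set.Ico (0 : ℝ) T) t) :
    ∀ t ∈ Set.Ioo (0 : ℝ) T,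
      HasDerivAt (fun s => ∑ i, sph (p i s)) (∑ i, sph (p i t)) t := by
  intro t ht
  have ht' : t ∈ Set.Ico (0 : ℝ) T := Set.Ioo_subset_Ico_self ht
  have hflow : ∀ i, HasDerivAt (p i) (pvVel d (fun j => p j t) i) t := fun i =>
    (hode t ht' i).hasDerivAt (Ico_mem_nhds ht.1 ht.2)
  rw [← sum_sphDeriv_pvVel hd hdsum fun i j hij => hdist t ht' i j hij]
  exact HasDerivAt.fun_sum fun i _ => (hflow i).sph_comp

/-- The sum of the sphere points of a solution of the planar point-vortex gradient
flow is differentiable on `(0,T)` and satisfies `V₀' = V₀`. -/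
theorem sum_sphere_points_hasDerivAt_self
    (n : ℕ) (hn : 1 ≤ n) (T : ℝ)
    (p : Fin (2 * n) → ℝ → E2) (d : Fin (2 * n) → ℤ)
    (hd : ∀ i, d i = 1 ∨ d i = -1) (hdsum : ∑ i, d i = 0)
    (hdist : ∀ t ∈ Set.Ico (0 : ℝ) T, ∀ i j, i ≠ j → p i t ≠ p j t)
    (hode : ∀ t ∈ Set.Ico (0 : ℝ) T, ∀ i,
      HasDerivWithinAt (p i) (pvVel d (fun j => p j t) i) (Set.Ico (0 : ℝ) T) t) :
    ∀ t ∈ Set.Ioo (0 : ℝ) T,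
      HasDerivAt (fun s => ∑ i, sph (p i s)) (∑ i, sph (p i t)) t :=
  sum_sphere_points_hasDerivAt_self_general n T p d hd hdsum hdist hode
end
end

section
/- Let p_1,…,p_{2n} : [0,T) → ℝ² be a solution of the planar point-vortex gradient flow. Then V₀(t) = e^t · V₀(0) for all t ∈ [0,T). Consequently, if V₀(0) ≠ 0 then the unit vector V₀(t)/|V₀(t)| is constant in t, equal to V₀(0)/|V₀(0)| (conservation of the center of mass direction). -/
/-!
Write the flow as `ṗᵢ = ((1 + |pᵢ|²)² / 2) • uᵢ`. Stereographic projection is conformal with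
factor `2 / (1 + |p|²)`, so the prefactor cancels and `Ṗᵢ` is linear in `uᵢ`. The term
`pᵢ / (1 + |pᵢ|²)` of `uᵢ` contributes `Pᵢ - (pᵢ, -1)`. The interaction of a pair `i ≠ j`,
counted in both orders, contributes `-dᵢ dⱼ ((pᵢ, -1) + (pⱼ, -1))`; as `∑ dⱼ = 0` and `dᵢ² = 1`
these add up to `∑ (pᵢ, -1)`. Hence `V₀' = V₀`, so `V₀(t) = eᵗ V₀(0)`, and scaling by `eᵗ > 0`
does not move the direction.
-/

open Finset

noncomputable section

open scoped RealInnerProductSpace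

section PairSums

variable {ι M : Type*} [Fintype ι] [DecidableEq ι]

theorem sum_sum_erase_comm [AddCommMonoid M] (F : ι → ι → M) :
    ∑ i, ∑ j ∈ univ.erase i, F j i = ∑ i, ∑ j ∈ univ.erase i, F i j :=
  sum_comm' fun i j => by simp [and_comm, ne_comm]

variable [AddCommGroup M] [Module ℝ M]

theorem sum_sum_erase_mul_smul_of_sum_eq_zero (w : ι → ℝ) (hw : ∑ i, w i = 0) (g : ι → M) :
    ∑ i, ∑ j ∈ univ.erase i, (w i * w j) • g i = -∑ i, w i ^ 2 • g i := by
  rw [← sum_neg_distrib]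
  refine sum_congr rfl fun i _ => ?_
  rw [← sum_smul, ← mul_sum, sum_erase_eq_sub (mem_univ i), hw, ← neg_smul]
  ring_nf

theorem sum_sum_erase_eq_of_add_swap_s1 (w : ι → ℝ) (hw : ∑ i, w i = 0) (F : ι → ι → M)
    (g : ι → M) (hF : ∀ i j, i ≠ j → F i j + F j i = -((w i * w j) • (g i + g j))) :
    ∑ i, ∑ j ∈ univ.erase i, F i j = ∑ i, w i ^ 2 • g i := by
  refine smul_right_injective M (two_ne_zero : (2 : ℝ) ≠ 0) ?_
  calc (2 : ℝ) • ∑ i, ∑ j ∈ univ.erase i, F i j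
      = ∑ i, ∑ j ∈ univ.erase i, (F i j + F j i) := by
        rw [two_smul]
        nth_rw 2 [← sum_sum_erase_comm]
        simp only [sum_add_distrib]
    _ = -∑ i, ∑ j ∈ univ.erase i, ((w i * w j) • g i + (w j * w i) • g j) := by
        simp only [← sum_neg_distrib]
        refine sum_congr rfl fun i _ => sum_congr rfl fun j hj => ?_
        rw [hF i j (mem_erase.1 hj).1.symm, smul_add, mul_comm (w j)]
    _ = (2 : ℝ) • ∑ i, w i ^ 2 • g i := by
        rw [sum_congr rfl fun i _ => sum_add_distrib, sum_add_distrib,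
          sum_sum_erase_comm fun i j => (w i * w j) • g i,
          sum_sum_erase_mul_smul_of_sum_eq_zero w hw, two_smul]
        abel

end PairSums

theorem Convex.eq_exp_sub_smul_of_hasDerivWithinAt_self {E : Type*} [NormedAddCommGroup E]
    [NormedSpace ℝ E] {f : ℝ → E} {s : Set ℝ} (hs : Convex ℝ s)
    (hf : ∀ x ∈ s, HasDerivWithinAt f (f x) s x) {a b : ℝ} (ha : a ∈ s) (hb : b ∈ s) :
    f b = Real.exp (b - a) • f a := by
  have hg : ∀ x ∈ s, HasDerivWithinAt (fun x => Real.exp (-x) • f x) 0 s x := fun x hx => by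
    simpa using (hasDerivAt_neg x).exp.hasDerivWithinAt.fun_smul (hf x hx)
  have hconst : Real.exp (-b) • f b = Real.exp (-a) • f a := by
    simpa [sub_eq_zero] using
      hs.norm_image_sub_le_of_norm_hasDerivWithin_le hg (fun _ _ => norm_zero.le) ha hb
  calc f b = Real.exp b • Real.exp (-b) • f b := by simp [smul_smul, ← Real.exp_add]
    _ = Real.exp (b - a) • f a := by rw [hconst, smul_smul, ← Real.exp_add, ← sub_eq_add_neg]

theorem inv_norm_smul_smul_of_pos {E : Type*} [NormedAddCommGroup E] [NormedSpace ℝ E]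
    {c : ℝ} (hc : 0 < c) (x : E) : ‖c • x‖⁻¹ • (c • x) = ‖x‖⁻¹ • x := by
  rw [norm_smul, Real.norm_of_nonneg hc.le, smul_smul, mul_inv_rev, mul_assoc,
    inv_mul_cancel₀ hc.ne', mul_one]

def embedPlane : E2 →L[ℝ] E3 := LinearMap.toContinuousLinearMap
  { toFun := fun p => !₂[p 0, p 1, 0]
    map_add' := fun p q => by ext i; fin_cases i <;> simp
    map_smul' := fun c p => by ext i; fin_cases i <;> simp }

def northPole : E3 := !₂[0, 0, 1]

theorem sph_eq_smul (p : E2) :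
    sph p = (1 + ‖p‖ ^ 2)⁻¹ • ((2 : ℝ) • embedPlane p + (‖p‖ ^ 2 - 1) • northPole) := by
  ext i; fin_cases i <;> simp [sph, embedPlane, northPole] <;> ring

/-- `(1 + ‖p‖²)² / 2` times the differential of `sph` at `p`. -/
def sphDerivScaled (p : E2) : E2 →ₗ[ℝ] E3 where
  toFun u := embedPlane ((1 + ‖p‖ ^ 2) • u - (2 * ⟪p, u⟫) • p) + (2 * ⟪p, u⟫) • northPole
  map_add' u v := by simp only [inner_add_right, map_sub, map_add, map_smul]; module
  map_smul' c u := by simp only [inner_smul_right, map_sub, map_smul, RingHom.id_apply]; module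

theorem HasDerivWithinAt.sph {γ : ℝ → E2} {v : E2} {s : Set ℝ} {t : ℝ}
    (h : HasDerivWithinAt γ v s t) :
    HasDerivWithinAt (fun x => sph (γ x))
      ((2 / (1 + ‖γ t‖ ^ 2) ^ 2) • sphDerivScaled (γ t) v) s t := by
  have hp : 1 + ‖γ t‖ ^ 2 ≠ 0 := by positivity
  have hr := h.norm_sq
  have hsph : HasDerivWithinAt
      (fun x => (1 + ‖γ x‖ ^ 2)⁻¹ • ((2 : ℝ) • embedPlane (γ x) + (‖γ x‖ ^ 2 - 1) • northPole))
      ((1 + ‖γ t‖ ^ 2)⁻¹ • ((2 : ℝ) • embedPlane v + (2 * ⟪γ t, v⟫) • northPole) +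
        (-(2 * ⟪γ t, v⟫) / (1 + ‖γ t‖ ^ 2) ^ 2) •
          ((2 : ℝ) • embedPlane (γ t) + (‖γ t‖ ^ 2 - 1) • northPole)) s t :=
    ((hr.const_add 1).inv hp).fun_smul
      (((embedPlane.hasFDerivAt.comp_hasDerivWithinAt t h).const_smul (2 : ℝ)).fun_add
        ((hr.sub_const 1).smul_const northPole))
  simp only [sph_eq_smul]
  convert hsph using 1
  simp only [sphDerivScaled, LinearMap.coe_mk, AddHom.coe_mk, map_sub, map_smul]
  match_scalars <;> field_simp
  ring

theorem sphDerivScaled_self (p : E2) :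
    sphDerivScaled p p = (1 + ‖p‖ ^ 2) • (sph p - (embedPlane p - northPole)) := by
  have : 1 + ‖p‖ ^ 2 ≠ 0 := by positivity
  rw [sph_eq_smul, smul_sub, smul_smul, mul_inv_cancel₀ this, one_smul]
  simp only [sphDerivScaled, LinearMap.coe_mk, AddHom.coe_mk, map_sub, map_smul,
    real_inner_self_eq_norm_sq]
  module

theorem sphDerivScaled_sub_add_sphDerivScaled_sub (p q : E2) :
    sphDerivScaled p (p - q) + sphDerivScaled q (q - p) =
      -‖p - q‖ ^ 2 • ((embedPlane p - northPole) + (embedPlane q - northPole)) := by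
  simp only [sphDerivScaled, LinearMap.coe_mk, AddHom.coe_mk, map_sub, map_smul,
    real_inner_self_eq_norm_sq, norm_sub_sq_real, real_inner_comm p q]
  module

theorem sum_smul_sphDerivScaled_pvVel_eq_sum_sph {N : ℕ} (d : Fin N → ℤ)
    (hd : ∀ i, d i = 1 ∨ d i = -1) (hdsum : ∑ i, d i = 0) {q : Fin N → E2}
    (hq : Function.Injective q) :
    ∑ i, (2 / (1 + ‖q i‖ ^ 2) ^ 2) • sphDerivScaled (q i) (pvVel d q i) = ∑ i, sph (q i) := by
  set g : Fin N → E3 := fun i => embedPlane (q i) - northPole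
  have hw : ∑ i, (d i : ℝ) = 0 := by exact_mod_cast hdsum
  have hd2 : ∀ i, (d i : ℝ) ^ 2 = 1 := fun i => by rcases hd i with h | h <;> simp [h]
  have hpair := sum_sum_erase_eq_of_add_swap_s1 (fun i => (d i : ℝ)) hw
    (fun i j => ((d i : ℝ) * ((d j : ℝ) * (‖q i - q j‖ ^ 2)⁻¹)) •
      sphDerivScaled (q i) (q i - q j)) g fun i j hij => by
    have hne : ‖q i - q j‖ ≠ 0 := norm_ne_zero_iff.2 (sub_ne_zero.2 (hq.ne hij))
    have hc : (d j : ℝ) * ((d i : ℝ) * (‖q j - q i‖ ^ 2)⁻¹) =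
        (d i : ℝ) * ((d j : ℝ) * (‖q i - q j‖ ^ 2)⁻¹) := by
      rw [norm_sub_rev]; ring
    rw [hc, ← smul_add, sphDerivScaled_sub_add_sphDerivScaled_sub, smul_smul, ← neg_smul]
    congr 1
    field_simp
  have hpos : ∀ i, 1 + ‖q i‖ ^ 2 ≠ 0 := fun i => by positivity
  calc ∑ i, (2 / (1 + ‖q i‖ ^ 2) ^ 2) • sphDerivScaled (q i) (pvVel d q i)
      = ∑ i, (sph (q i) - g i) + ∑ i, ∑ j ∈ univ.erase i,
          ((d i : ℝ) * ((d j : ℝ) * (‖q i - q j‖ ^ 2)⁻¹)) • sphDerivScaled (q i) (q i - q j) := by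
        rw [← sum_add_distrib]
        refine sum_congr rfl fun i _ => ?_
        simp only [pvVel, map_smul, map_add, map_sum, smul_smul, smul_sum, sphDerivScaled_self]
        have hscale : 2 / (1 + ‖q i‖ ^ 2) ^ 2 * ((1 + ‖q i‖ ^ 2) ^ 2 / 2) = 1 := by
          field_simp
        rw [hscale, one_smul, inv_mul_cancel₀ (hpos i), one_smul]
    _ = ∑ i, sph (q i) := by rw [hpair]; simp [hd2]

theorem sum_sphere_points_exp_growth_general
    (n : ℕ) (T : ℝ)
    (p : Fin (2 * n) → ℝ → E2) (d : Fin (2 * n) → ℤ)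
    (hd : ∀ i, d i = 1 ∨ d i = -1) (hdsum : ∑ i, d i = 0)
    (hdist : ∀ t ∈ Set.Ico (0 : ℝ) T, ∀ i j, i ≠ j → p i t ≠ p j t)
    (hode : ∀ t ∈ Set.Ico (0 : ℝ) T, ∀ i,
      HasDerivWithinAt (p i) (pvVel d (fun j => p j t) i) (Set.Ico (0 : ℝ) T) t) :
    (∀ t ∈ Set.Ico (0 : ℝ) T,
        ∑ i, sph (p i t) = Real.exp t • ∑ i, sph (p i 0)) ∧
    ((∑ i, sph (p i 0)) ≠ 0 → ∀ t ∈ Set.Ico (0 : ℝ) T,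
        ‖∑ i, sph (p i t)‖⁻¹ • ∑ i, sph (p i t)
          = ‖∑ i, sph (p i 0)‖⁻¹ • ∑ i, sph (p i 0)) := by
  have hV : ∀ t ∈ Set.Ico (0 : ℝ) T, HasDerivWithinAt (fun u => ∑ i, sph (p i u))
      (∑ i, sph (p i t)) (Set.Ico (0 : ℝ) T) t := by
    intro t ht
    have hinj : Function.Injective fun j => p j t := fun i j h =>
      by_contra fun hij => hdist t ht i j hij h
    rw [← sum_smul_sphDerivScaled_pvVel_eq_sum_sph d hd hdsum hinj]
    exact HasDerivWithinAt.fun_sum fun i _ => (hode t ht i).sph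
  have hgrowth : ∀ t ∈ Set.Ico (0 : ℝ) T, ∑ i, sph (p i t) = Real.exp t • ∑ i, sph (p i 0) :=
    fun t ht => by
      simpa using (convex_Ico 0 T).eq_exp_sub_smul_of_hasDerivWithinAt_self hV
        (Set.left_mem_Ico.2 (ht.1.trans_lt ht.2)) ht
  refine ⟨hgrowth, fun _ t ht => ?_⟩
  rw [hgrowth t ht, inv_norm_smul_smul_of_pos (Real.exp_pos t)]

/-- For a solution of the planar point-vortex gradient flow, the sum `V₀` of the sphere
points satisfies `V₀(t) = eᵗ • V₀(0)`; consequently if `V₀(0) ≠ 0` the unit vector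
`V₀(t)/‖V₀(t)‖` is constant (conservation of the center of mass direction). -/
theorem sum_sphere_points_exp_growth
    (n : ℕ) (hn : 1 ≤ n) (T : ℝ)
    (p : Fin (2 * n) → ℝ → E2) (d : Fin (2 * n) → ℤ)
    (hd : ∀ i, d i = 1 ∨ d i = -1) (hdsum : ∑ i, d i = 0)
    (hdist : ∀ t ∈ Set.Ico (0 : ℝ) T, ∀ i j, i ≠ j → p i t ≠ p j t)
    (hode : ∀ t ∈ Set.Ico (0 : ℝ) T, ∀ i,
      HasDerivWithinAt (p i) (pvVel d (fun j => p j t) i) (Set.Ico (0 : ℝ) T) t) :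
    (∀ t ∈ Set.Ico (0 : ℝ) T,
        ∑ i, sph (p i t) = Real.exp t • ∑ i, sph (p i 0)) ∧
    ((∑ i, sph (p i 0)) ≠ 0 → ∀ t ∈ Set.Ico (0 : ℝ) T,
        ‖∑ i, sph (p i t)‖⁻¹ • ∑ i, sph (p i t)
          = ‖∑ i, sph (p i 0)‖⁻¹ • ∑ i, sph (p i 0)) :=
  sum_sphere_points_exp_growth_general n T p d hd hdsum hdist hode
end
end

section
/- Let p_1,…,p_{2n} ∈ ℝ² be pairwise distinct points which form an equilibrium of the planar point-vortex gradient flow, i.e. p_i/(1+r_i²) + d_i Σ_{j≠i} d_j (p_i − p_j)/|p_i − p_j|² = 0 for every i = 1,…,2n, where r_i² = |p_i|². Then the corresponding sphere points satisfy Σ_{i=1}^{2n} P_i = 0; that is, V₀ = 0 is a necessary condition for an equilibrium of the flow. -/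
open Finset

noncomputable section

/-! The interaction terms `dᵢ dⱼ (qᵢ - qⱼ)/|qᵢ - qⱼ|²` are antisymmetric in `(i, j)`, so summing
the equilibrium equations gives `∑ qᵢ/(1 + rᵢ²) = 0`, the horizontal part of `∑ Pᵢ`. Pairing
the `i`-th equation with `qᵢ` instead, the pair `{i, j}` contributes exactly `dᵢ dⱼ`, and
`∑_{i<j} dᵢ dⱼ = ((∑ d)² - ∑ d²)/2 = -n`; hence `∑ rᵢ²/(1 + rᵢ²) = n`, which makes the vertical
part `∑ (rᵢ² - 1)/(1 + rᵢ²)` vanish. -/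

open RealInnerProductSpace

variable {ι : Type*}

theorem sum_sum_add_swap [Fintype ι] {M : Type*} [AddCommMonoid M] (f : ι → ι → M) :
    ∑ i, ∑ j, (f i j + f j i) = 2 • ∑ i, ∑ j, f i j := by
  simp only [sum_add_distrib, two_nsmul]
  rw [sum_comm (f := fun i j => f j i)]

theorem inner_inv_norm_sq_smul_self {E : Type*} [NormedAddCommGroup E] [InnerProductSpace ℝ E]
    {x : E} (hx : x ≠ 0) : ⟪(‖x‖ ^ 2)⁻¹ • x, x⟫ = 1 := by
  rw [real_inner_smul_left, real_inner_self_eq_norm_sq, inv_mul_cancel₀ (by positivity)]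

section Interaction

variable {E : Type*} [NormedAddCommGroup E]

def pairForce [NormedSpace ℝ E] (q : ι → E) (i j : ι) : E :=
  (‖q i - q j‖ ^ 2)⁻¹ • (q i - q j)

theorem pairForce_self [NormedSpace ℝ E] (q : ι → E) (i : ι) : pairForce q i i = 0 := by
  simp [pairForce]

theorem pairForce_swap [NormedSpace ℝ E] (q : ι → E) (i j : ι) :
    pairForce q j i = -pairForce q i j := by
  rw [pairForce, pairForce, ← neg_sub, norm_neg, smul_neg]

variable [Fintype ι] [DecidableEq ι]

def interaction [NormedSpace ℝ E] (d : ι → ℝ) (q : ι → E) (i : ι) : E :=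
  ∑ j ∈ univ.erase i, d j • pairForce q i j

def IsEquilibrium [NormedSpace ℝ E] (d : ι → ℝ) (q : ι → E) : Prop :=
  ∀ i, (1 + ‖q i‖ ^ 2)⁻¹ • q i + d i • interaction d q i = 0

theorem interaction_eq_sum [NormedSpace ℝ E] (d : ι → ℝ) (q : ι → E) (i : ι) :
    interaction d q i = ∑ j, d j • pairForce q i j :=
  sum_erase _ (by rw [pairForce_self, smul_zero])

theorem sum_smul_interaction [NormedSpace ℝ E] (d : ι → ℝ) (q : ι → E) :
    ∑ i, d i • interaction d q i = 0 := by
  set S := ∑ i, ∑ j, d i • d j • pairForce q i j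
  have hS : 2 • S = 0 := by
    rw [← sum_sum_add_swap]
    refine sum_eq_zero fun i _ => sum_eq_zero fun j _ => ?_
    rw [pairForce_swap, smul_neg, smul_neg, smul_comm (d j) (d i), neg_add_cancel]
  have hS' : (2 : ℝ) • S = 0 := by rwa [two_smul, ← two_nsmul]
  simp_rw [interaction_eq_sum, smul_sum]
  exact (smul_eq_zero.mp hS').resolve_left two_ne_zero

theorem sum_mul_inner_interaction [InnerProductSpace ℝ E] (d : ι → ℝ) {q : ι → E}
    (hq : Function.Injective q) :
    ∑ i, d i * ⟪interaction d q i, q i⟫ = ((∑ i, d i) ^ 2 - ∑ i, d i ^ 2) / 2 := by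
  have hswap : ∀ i j, d i * d j * ⟪pairForce q i j, q i⟫ + d j * d i * ⟪pairForce q j i, q j⟫
      = d i * d j - if i = j then d i ^ 2 else 0 := by
    intro i j
    rcases eq_or_ne i j with rfl | hij
    · simp [pairForce_self, sq]
    · have h := inner_inv_norm_sq_smul_self (sub_ne_zero.mpr (hq.ne hij))
      rw [inner_sub_right, ← pairForce] at h
      rw [pairForce_swap q i j, inner_neg_left, if_neg hij]
      linear_combination d i * d j * h
  have h2 := sum_sum_add_swap fun i j => d i * d j * ⟪pairForce q i j, q i⟫
  simp only [hswap, sum_sub_distrib, sum_ite_eq, mem_univ, if_true, ← mul_sum, ← sum_mul,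
    nsmul_eq_mul] at h2
  simp_rw [interaction_eq_sum, sum_inner, real_inner_smul_left, mul_sum, ← mul_assoc]
  linear_combination -h2 / 2

end Interaction

namespace IsEquilibrium

variable [Fintype ι] [DecidableEq ι] {E : Type*} [NormedAddCommGroup E] [InnerProductSpace ℝ E]
  {d : ι → ℝ} {q : ι → E}

theorem sum_inv_smul_eq_zero (h : IsEquilibrium d q) : ∑ i, (1 + ‖q i‖ ^ 2)⁻¹ • q i = 0 := by
  simpa [sum_add_distrib, sum_smul_interaction] using sum_eq_zero fun i (_ : i ∈ univ) => h i

theorem sum_norm_sq_div_one_add_norm_sq (h : IsEquilibrium d q) (hd : ∀ i, d i ^ 2 = 1)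
    (hdsum : ∑ i, d i = 0) (hq : Function.Injective q) :
    ∑ i, ‖q i‖ ^ 2 / (1 + ‖q i‖ ^ 2) = (Fintype.card ι : ℝ) / 2 := by
  have hi : ∀ i, ‖q i‖ ^ 2 / (1 + ‖q i‖ ^ 2) + d i * ⟪interaction d q i, q i⟫ = 0 := fun i => by
    simpa [inner_add_left, real_inner_smul_left, real_inner_self_eq_norm_sq, div_eq_inv_mul]
      using congrArg (⟪·, q i⟫) (h i)
  have := sum_eq_zero fun i (_ : i ∈ univ) => hi i
  rw [sum_add_distrib, sum_mul_inner_interaction d hq, hdsum, sum_congr rfl fun i _ => hd i]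
    at this
  simp only [sum_const, card_univ, nsmul_eq_mul, mul_one] at this
  linarith

end IsEquilibrium

theorem sum_sph_eq_zero [Fintype ι] (q : ι → E2) (h₁ : ∑ i, (1 + ‖q i‖ ^ 2)⁻¹ • q i = 0)
    (h₂ : ∑ i, ‖q i‖ ^ 2 / (1 + ‖q i‖ ^ 2) = (Fintype.card ι : ℝ) / 2) :
    ∑ i, sph (q i) = 0 := by
  have hcoord : ∀ k, ∑ i, (1 + ‖q i‖ ^ 2)⁻¹ * q i k = 0 := fun k => by
    simpa using congrArg (· k) h₁
  have hvert : ∀ i, (‖q i‖ ^ 2 - 1) / (1 + ‖q i‖ ^ 2) = 2 * (‖q i‖ ^ 2 / (1 + ‖q i‖ ^ 2)) - 1 :=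
    fun i => by field_simp; ring
  ext k
  fin_cases k
  · simpa [sph, div_eq_inv_mul, mul_left_comm, ← mul_sum] using hcoord 0
  · simpa [sph, div_eq_inv_mul, mul_left_comm, ← mul_sum] using hcoord 1
  · simp [sph, hvert, sum_sub_distrib, ← mul_sum, h₂, mul_div_cancel₀]

theorem equilibrium_sum_sphere_points_eq_zero_general
    (n : ℕ)
    (q : Fin (2 * n) → E2) (d : Fin (2 * n) → ℤ)
    (hd : ∀ i, d i = 1 ∨ d i = -1) (hdsum : ∑ i, d i = 0)
    (hdist : ∀ i j, i ≠ j → q i ≠ q j)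
    (heq : ∀ i, (1 + ‖q i‖ ^ 2)⁻¹ • q i +
      (d i : ℝ) • ∑ j ∈ univ.erase i, (d j : ℝ) • (‖q i - q j‖ ^ 2)⁻¹ • (q i - q j) = 0) :
    ∑ i, sph (q i) = 0 := by
  have hequil : IsEquilibrium (fun i => (d i : ℝ)) q := heq
  have hd_sq : ∀ i, (d i : ℝ) ^ 2 = 1 := fun i => by rcases hd i with h | h <;> simp [h]
  have hdsum_real : ∑ i, (d i : ℝ) = 0 := by exact_mod_cast hdsum
  have hq : Function.Injective q := fun i j hij => by_contra fun hne => hdist i j hne hij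
  exact sum_sph_eq_zero q hequil.sum_inv_smul_eq_zero
    (hequil.sum_norm_sq_div_one_add_norm_sq hd_sq hdsum_real hq)

/-- `V₀ = 0` is a necessary condition for an equilibrium of the planar point-vortex
gradient flow: if pairwise distinct points form an equilibrium, the sum of the
corresponding sphere points vanishes. -/
theorem equilibrium_sum_sphere_points_eq_zero
    (n : ℕ) (hn : 1 ≤ n)
    (q : Fin (2 * n) → E2) (d : Fin (2 * n) → ℤ)
    (hd : ∀ i, d i = 1 ∨ d i = -1) (hdsum : ∑ i, d i = 0)
    (hdist : ∀ i j, i ≠ j → q i ≠ q j)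
    (heq : ∀ i, (1 + ‖q i‖ ^ 2)⁻¹ • q i +
      (d i : ℝ) • ∑ j ∈ univ.erase i, (d j : ℝ) • (‖q i - q j‖ ^ 2)⁻¹ • (q i - q j) = 0) :
    ∑ i, sph (q i) = 0 :=
  equilibrium_sum_sphere_points_eq_zero_general n q d hd hdsum hdist heq
end
end

section
/- Let c ∈ ℝ, c ≠ 0, and let J ⊆ ℝ be an interval of times t on which 1 − c e^t > 0 and (1 + c e^t)/(1 − c e^t) > 0. Define q(t) = √((1 + c e^t)/(1 − c e^t)) for t ∈ J. Then q satisfies q'(t) = (q(t)⁴ − 1)/(4 q(t)), and consequently the pair p_1(t) = (q(t), 0), p_2(t) = (−q(t), 0) with degrees d_1 = 1, d_2 = −1 is an explicit solution of the planar point-vortex gradient flow with n = 1 on J. -/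
open Finset

noncomputable section

/-- The two positions `(q t, 0)` and `(-q t, 0)` in the plane. -/
def pairPos (q : ℝ → ℝ) (t : ℝ) : Fin 2 → E2 :=
  ![(WithLp.equiv 2 (Fin 2 → ℝ)).symm ![q t, 0],
    (WithLp.equiv 2 (Fin 2 → ℝ)).symm ![-q t, 0]]

/-! Writing `u = c eᵗ`, the ratio `f = (1 + u)/(1 - u)` solves the Riccati equation
`f' = 2u/(1 - u)² = (f² - 1)/2`, so `q = √f` solves `q' = f'/(2q) = (q⁴ - 1)/(4q)`.
For the pair `±q e₁` with degrees `1, -1`, the self-term of the velocity is `(1 + q²) q/2`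
and the attraction term `-(1 + q²)²/(4q)`, both along `±e₁`; they add up to `±(q⁴ - 1)/(4q)`,
which is exactly the speed at which `±q e₁` moves. -/

open Real

theorem hasDerivAt_one_add_div_one_sub_exp (c t : ℝ) (h : 1 - c * exp t ≠ 0) :
    HasDerivAt (fun s => (1 + c * exp s) / (1 - c * exp s))
      ((((1 + c * exp t) / (1 - c * exp t)) ^ 2 - 1) / 2) t := by
  have hexp := (hasDerivAt_exp t).const_mul c
  refine ((hexp.const_add 1).div (hexp.const_sub 1) h).congr_deriv ?_
  field_simp
  ring

theorem HasDerivAt.sqrt_of_sq_sub_one {f : ℝ → ℝ} {t : ℝ}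
    (hf : HasDerivAt f ((f t ^ 2 - 1) / 2) t) (hpos : 0 < f t) :
    HasDerivAt (fun s => √(f s)) ((√(f t) ^ 4 - 1) / (4 * √(f t))) t := by
  have h4 : √(f t) ^ 4 = f t ^ 2 := by rw [show 4 = 2 * 2 from rfl, pow_mul, sq_sqrt hpos.le]
  refine (hf.sqrt hpos.ne').congr_deriv ?_
  rw [h4]
  ring

theorem pairPos_apply (q : ℝ → ℝ) (t : ℝ) (i : Fin 2) : pairPos q t i = q t • pairPos 1 0 i := by
  fin_cases i <;> ext k <;> fin_cases k <;> simp [pairPos]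

theorem hasDerivAt_pairPos {q : ℝ → ℝ} {q' t : ℝ} (hq : HasDerivAt q q' t) (i : Fin 2) :
    HasDerivAt (fun s => pairPos q s i) (q' • pairPos 1 0 i) t := by
  rw [funext fun s => pairPos_apply q s i]
  exact hq.smul_const (pairPos 1 0 i)

theorem pairPos_injective {q : ℝ → ℝ} {t : ℝ} (h : q t ≠ 0) :
    Function.Injective (pairPos q t) := by
  intro i j hij
  have h0 := congrArg (· 0) hij
  fin_cases i <;> fin_cases j <;> simp [pairPos] at h0 ⊢ <;> exact h (by linarith)

theorem pvVel_pairPos {q : ℝ → ℝ} {t : ℝ} (h : q t ≠ 0) (i : Fin 2) :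
    pvVel ![1, -1] (pairPos q t) i = ((q t ^ 4 - 1) / (4 * q t)) • pairPos 1 0 i := by
  fin_cases i <;> ext k <;> fin_cases k <;>
    simp [pvVel, pairPos, EuclideanSpace.norm_eq, Fin.sum_univ_two, sq_sqrt, sq_nonneg] <;>
    field_simp <;> ring

theorem explicit_two_vortex_solution_general
    (c : ℝ) (J : Set ℝ)
    (hpos : ∀ t ∈ J, 0 < 1 - c * Real.exp t ∧ 0 < (1 + c * Real.exp t) / (1 - c * Real.exp t))
    (q : ℝ → ℝ)
    (hq : ∀ t, q t = Real.sqrt ((1 + c * Real.exp t) / (1 - c * Real.exp t))) :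
    ∀ t ∈ J,
      HasDerivAt q ((q t ^ 4 - 1) / (4 * q t)) t ∧
      (∀ i j : Fin 2, i ≠ j → pairPos q t i ≠ pairPos q t j) ∧
      (∀ i : Fin 2, HasDerivAt (fun s => pairPos q s i)
        (pvVel ![1, -1] (pairPos q t) i) t) := by
  intro t ht
  obtain ⟨hden, hratio⟩ := hpos t ht
  have hq0 : q t ≠ 0 := by
    rw [hq]
    exact (sqrt_pos.2 hratio).ne'
  have hderiv : HasDerivAt q ((q t ^ 4 - 1) / (4 * q t)) t := by
    rw [funext hq]
    exact (hasDerivAt_one_add_div_one_sub_exp c t hden.ne').sqrt_of_sq_sub_one hratio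
  refine ⟨hderiv, fun i j hij h => hij (pairPos_injective hq0 h), fun i => ?_⟩
  rw [pvVel_pairPos hq0]
  exact hasDerivAt_pairPos hderiv i

/-- With `q(t) = √((1+ceᵗ)/(1-ceᵗ))` on an interval where both `1-ceᵗ > 0` and
`(1+ceᵗ)/(1-ceᵗ) > 0`, one has `q' = (q⁴-1)/(4q)`, and the pair `p₁ = (q,0)`,
`p₂ = (-q,0)` with degrees `1, -1` is an explicit solution of the planar point-vortex
gradient flow with `n = 1`. -/
theorem explicit_two_vortex_solution
    (c : ℝ) (hc : c ≠ 0) (J : Set ℝ) (hJ : J.OrdConnected)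
    (hpos : ∀ t ∈ J, 0 < 1 - c * Real.exp t ∧ 0 < (1 + c * Real.exp t) / (1 - c * Real.exp t))
    (q : ℝ → ℝ)
    (hq : ∀ t, q t = Real.sqrt ((1 + c * Real.exp t) / (1 - c * Real.exp t))) :
    ∀ t ∈ J,
      HasDerivAt q ((q t ^ 4 - 1) / (4 * q t)) t ∧
      (∀ i j : Fin 2, i ≠ j → pairPos q t i ≠ pairPos q t j) ∧
      (∀ i : Fin 2, HasDerivAt (fun s => pairPos q s i)
        (pvVel ![1, -1] (pairPos q t) i) t) :=
  explicit_two_vortex_solution_general c J hpos q hq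
end
end

section
/- Let N ≥ 2, let b_1,…,b_N ∈ ℝ² be pairwise distinct, and let d_1,…,d_N ∈ {1,−1} with Σ_{i=1}^N d_i = 0. Let f(x) = ln(2/(1+|x|²)) and let P_i = (2b_i/(1+|b_i|²), (|b_i|²−1)/(1+|b_i|²)) ∈ S² ⊂ ℝ³ be the inverse stereographic projections of the b_i. Then the renormalized energy satisfies π Σ_{i=1}^N d_i² f(b_i) − π Σ_{i≠j} d_i d_j ln|b_i − b_j| = −π Σ_{i≠j} d_i d_j ln|P_i − P_j|, where |P_i − P_j| is the Euclidean (chordal) distance in ℝ³. -/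
open Finset

noncomputable section

/-! The chordal distance is the planar distance scaled by the conformal factor
`e^{f} = 2 / (1 + |x|²)` at both ends, so `ln |P - Q| = ln |p - q| + (f p + f q) / 2`; the
`f`-terms then sum to the self-energy term because `Σ dᵢ = 0` kills the full double sum. -/

lemma EuclideanSpace.norm_sq_fin_two (x : E2) : ‖x‖ ^ 2 = x 0 ^ 2 + x 1 ^ 2 := by
  simp [EuclideanSpace.norm_sq_eq, Fin.sum_univ_two]

lemma EuclideanSpace.norm_sq_fin_three (x : E3) : ‖x‖ ^ 2 = x 0 ^ 2 + x 1 ^ 2 + x 2 ^ 2 := by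
  simp [EuclideanSpace.norm_sq_eq, Fin.sum_univ_three]

lemma norm_sph_sub_sph_sq (p q : E2) :
    ‖sph p - sph q‖ ^ 2 = 2 / (1 + ‖p‖ ^ 2) * (2 / (1 + ‖q‖ ^ 2)) * ‖p - q‖ ^ 2 := by
  have hp : 1 + (p 0 ^ 2 + p 1 ^ 2) ≠ 0 := by positivity
  have hq : 1 + (q 0 ^ 2 + q 1 ^ 2) ≠ 0 := by positivity
  simp only [EuclideanSpace.norm_sq_fin_three, EuclideanSpace.norm_sq_fin_two, sph,
    PiLp.sub_apply, WithLp.equiv_symm_apply, Matrix.cons_val_zero,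
    Matrix.cons_val_one, Matrix.cons_val_two, Matrix.head_cons, Matrix.tail_cons]
  field_simp
  ring

lemma log_norm_sph_sub_sph {p q : E2} (hpq : p ≠ q) :
    Real.log ‖sph p - sph q‖ = Real.log ‖p - q‖
      + (Real.log (2 / (1 + ‖p‖ ^ 2)) + Real.log (2 / (1 + ‖q‖ ^ 2))) / 2 := by
  have hp : 2 / (1 + ‖p‖ ^ 2) ≠ 0 := by positivity
  have hq : 2 / (1 + ‖q‖ ^ 2) ≠ 0 := by positivity
  have hpq' : ‖p - q‖ ^ 2 ≠ 0 := by simpa [sub_eq_zero] using hpq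
  have hlog := congrArg Real.log (norm_sph_sub_sph_sq p q)
  rw [Real.log_mul (mul_ne_zero hp hq) hpq', Real.log_mul hp hq, Real.log_pow,
    Real.log_pow] at hlog
  push_cast at hlog
  linarith

lemma sum_sum_erase_mul_add_eq_neg_of_sum_eq_zero {ι R : Type*} [Fintype ι] [DecidableEq ι]
    [CommRing R] (d g : ι → R) (hd : ∑ i, d i = 0) :
    ∑ i, ∑ j ∈ univ.erase i, d i * d j * (g i + g j) = -(2 * ∑ i, d i ^ 2 * g i) := by
  have hfull : ∑ i, ∑ j, d i * d j * (g i + g j) = 0 := by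
    simp only [mul_add, sum_add_distrib, ← sum_mul, ← mul_sum, hd]
    rw [sum_comm]
    simp [← sum_mul, hd]
  have hsplit (i : ι) : ∑ j ∈ univ.erase i, d i * d j * (g i + g j)
      = ∑ j, d i * d j * (g i + g j) - 2 * (d i ^ 2 * g i) := by
    rw [sum_erase_eq_sub (mem_univ i)]
    ring
  simp only [hsplit, sum_sub_distrib, hfull, ← mul_sum]
  ring

open Real in
theorem renormalized_energy_chordal_general
    (N : ℕ) (b : Fin N → E2) (d : Fin N → ℤ)
    (hb : ∀ i j, i ≠ j → b i ≠ b j)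
    (hdsum : ∑ i, d i = 0) :
    π * ∑ i, (d i : ℝ) ^ 2 * Real.log (2 / (1 + ‖b i‖ ^ 2))
      - π * ∑ i, ∑ j ∈ univ.erase i, (d i : ℝ) * (d j : ℝ) * Real.log ‖b i - b j‖
    = -(π * ∑ i, ∑ j ∈ univ.erase i,
          (d i : ℝ) * (d j : ℝ) * Real.log ‖sph (b i) - sph (b j)‖) := by
  set f : Fin N → ℝ := fun i => Real.log (2 / (1 + ‖b i‖ ^ 2))
  have hchordal : ∀ i, ∀ j ∈ univ.erase i,
      (d i : ℝ) * d j * Real.log ‖sph (b i) - sph (b j)‖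
        = d i * d j * Real.log ‖b i - b j‖ + d i * d j * (f i + f j) / 2 := by
    intro i j hj
    rw [log_norm_sph_sub_sph (hb i j (ne_of_mem_erase hj).symm)]
    ring
  have hself := sum_sum_erase_mul_add_eq_neg_of_sum_eq_zero (fun i => (d i : ℝ)) f
    (by exact_mod_cast hdsum)
  simp only [sum_congr rfl fun i _ => sum_congr rfl (hchordal i), sum_add_distrib, hself,
    ← sum_div]
  ring

open Real in
/-- On `S²` with conformal factor `f(x) = ln(2/(1+|x|²))`, the renormalized energy equals
`-π Σ_{i≠j} d_i d_j ln|P_i - P_j|`, where `|P_i - P_j|` is the chordal distance between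
the inverse stereographic projections. -/
theorem renormalized_energy_chordal
    (N : ℕ) (hN : 2 ≤ N) (b : Fin N → E2) (d : Fin N → ℤ)
    (hb : ∀ i j, i ≠ j → b i ≠ b j)
    (hd : ∀ i, d i = 1 ∨ d i = -1) (hdsum : ∑ i, d i = 0) :
    π * ∑ i, (d i : ℝ) ^ 2 * Real.log (2 / (1 + ‖b i‖ ^ 2))
      - π * ∑ i, ∑ j ∈ univ.erase i, (d i : ℝ) * (d j : ℝ) * Real.log ‖b i - b j‖
    = -(π * ∑ i, ∑ j ∈ univ.erase i,
          (d i : ℝ) * (d j : ℝ) * Real.log ‖sph (b i) - sph (b j)‖) :=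
  renormalized_energy_chordal_general N b d hb hdsum
end
end
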